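/- arXiv:2010.03796 — 2 statements merged into one kernel-verified Lean document; each statement's English description precedes it below -/
import Mathlib

section
/- For every N > 0 there is a constant c_N > 0 such that for all r with 0 < r ≤ N and all x' ∈ ℝ one has (x' - U'(r))² + V'(r)² ≥ c_N · ( r² + (x' + ρ)² ). In other words, the squared distance from the real point x' to the point U'(r) + iV'(r) is bounded below by c_N times r² plus the squared distance from x' to -ρ. -/
/-!
Put `F t = (ζ* + t) ^ γ`. Since `γ · arg ζ* = π`, `F 0 = -ρ`. For `t ≥ 0` the argument of
`ζ* + t` lies in `(0, θ₀]`, so `(γ - 1) · arg (ζ* + t) ∈ (0, π - θ₀]` and the derivative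
`γ (ζ* + t) ^ (γ - 1)` has positive imaginary part. On the compact interval `[0, N]` the mean
value theorem then gives `V' r ≥ m r` and `|U' r + ρ| ≤ ‖F r - F 0‖ ≤ M r`, and the claim follows
from `(x' + ρ)² ≤ 2 (x' - U' r)² + 2 M² r²` and `m² r² ≤ V' r ²`.
-/

open Complex Set
open scoped Real

namespace Complex

lemma arg_pos_of_im_pos {z : ℂ} (hz : 0 < z.im) : 0 < arg z :=
  (arg_nonneg_iff.2 hz.le).lt_of_ne fun h => hz.ne' (arg_eq_zero_iff.1 h.symm).2

lemma arg_lt_pi_of_im_pos {z : ℂ} (hz : 0 < z.im) : arg z < π :=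
  arg_lt_pi_iff.2 (Or.inr hz.ne')

lemma arg_add_ofReal_le {z : ℂ} (hz : 0 < z.im) {t : ℝ} (ht : 0 ≤ t) :
    arg (z + t) ≤ arg z := by
  by_contra! h
  have hzt : 0 < (z + t).im := by simpa using hz
  have hsin : 0 < Real.sin (arg (z + t) - arg z) :=
    Real.sin_pos_of_pos_of_lt_pi (sub_pos.2 h)
      (by linarith [arg_le_pi (z + t), arg_pos_of_im_pos hz])
  have hz0 : 0 < ‖z‖ := norm_pos_iff.2 fun h0 => by simp [h0] at hz
  have hzt0 : 0 < ‖z + t‖ := norm_pos_iff.2 fun h0 => by simp [h0] at hzt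
  rw [Real.sin_sub, sin_arg, sin_arg, cos_arg (norm_pos_iff.1 hzt0), cos_arg (norm_pos_iff.1 hz0),
    show (z + t).im = z.im by simp, show (z + t).re = z.re + t by simp] at hsin
  have hsin_eq : z.im / ‖z + t‖ * (z.re / ‖z‖) - (z.re + t) / ‖z + t‖ * (z.im / ‖z‖) =
      -(t * z.im) / (‖z + t‖ * ‖z‖) := by
    field_simp
    ring
  rw [hsin_eq] at hsin
  exact hsin.not_ge (div_nonpos_of_nonpos_of_nonneg (neg_nonpos.2 (mul_nonneg ht hz.le))
    (mul_pos hzt0 hz0).le)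

lemma cpow_pi_div_arg {z : ℂ} (hz : arg z ≠ 0) :
    z ^ ((π / arg z : ℝ) : ℂ) = -((‖z‖ ^ (π / arg z) : ℝ) : ℂ) := by
  apply Complex.ext <;>
    simp only [cpow_ofReal_re, cpow_ofReal_im, mul_div_cancel₀ _ hz, Real.cos_pi, Real.sin_pi] <;>
    simp

lemma im_cpow_ofReal_pos {z : ℂ} {s : ℝ} (h0 : 0 < arg z * s) (hπ : arg z * s < π) :
    0 < (z ^ (s : ℂ)).im := by
  have hz : z ≠ 0 := by rintro rfl; simp at h0
  rw [cpow_ofReal_im]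
  exact mul_pos (Real.rpow_pos_of_pos (norm_pos_iff.2 hz) _) (Real.sin_pos_of_pos_of_lt_pi h0 hπ)

lemma hasDerivAt_add_ofReal_cpow {z : ℂ} (hz : z.im ≠ 0) (c : ℂ) (t : ℝ) :
    HasDerivAt (fun s : ℝ => (z + s) ^ c) (c * (z + t) ^ (c - 1)) t := by
  have hslit : z + t ∈ slitPlane := mem_slitPlane_iff.2 (Or.inr (by simpa using hz))
  simpa using (((hasDerivAt_id (t : ℂ)).const_add z).cpow_const hslit).comp_ofReal

lemma im_mul_cpow_pi_div_arg_pos {z : ℂ} (hz : 0 < z.im) {t : ℝ} (ht : 0 ≤ t) :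
    0 < (((π / arg z : ℝ) : ℂ) * (z + t) ^ (((π / arg z : ℝ) : ℂ) - 1)).im := by
  have harg := arg_pos_of_im_pos hz
  have hγ : 1 < π / arg z := (one_lt_div harg).2 (arg_lt_pi_of_im_pos hz)
  have hle : arg (z + t) * (π / arg z - 1) ≤ arg z * (π / arg z - 1) :=
    mul_le_mul_of_nonneg_right (arg_add_ofReal_le hz ht) (by linarith)
  have hγarg : arg z * (π / arg z - 1) = π - arg z := by field_simp
  rw [im_ofReal_mul, show ((π / arg z : ℝ) : ℂ) - 1 = ((π / arg z - 1 : ℝ) : ℂ) by push_cast; ring]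
  refine mul_pos (by linarith) (im_cpow_ofReal_pos (mul_pos ?_ (by linarith)) (by linarith))
  exact arg_pos_of_im_pos (by simpa using hz)

end Complex

section MeanValue

variable {F G : ℝ → ℂ} {a b : ℝ}

lemma exists_pos_mul_sub_le_im_sub (hab : a ≤ b) (hF : ∀ t ∈ Icc a b, HasDerivAt F (G t) t)
    (hG : ContinuousOn G (Icc a b)) (hGim : ∀ t ∈ Icc a b, 0 < (G t).im) :
    ∃ m > 0, ∀ r ∈ Icc a b, m * (r - a) ≤ (F r - F a).im := by
  obtain ⟨t₀, ht₀, hmin⟩ :=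
    isCompact_Icc.exists_isMinOn (nonempty_Icc.2 hab) (continuous_im.comp_continuousOn hG)
  refine ⟨(G t₀).im, hGim t₀ ht₀, fun r hr => ?_⟩
  have hmono : MonotoneOn (fun t => (F t).im - (G t₀).im * t) (Icc a b) := by
    refine monotoneOn_of_hasDerivWithinAt_nonneg (convex_Icc a b) ?_ (fun t ht => ?_)
      (fun t ht => sub_nonneg.2 (hmin (interior_subset ht)))
    · exact fun t ht => ((continuous_im.continuousAt.comp (hF t ht).continuousAt).sub
        (continuousAt_id.const_mul _)).continuousWithinAt
    · have him : HasDerivAt (fun s => (F s).im) (G t).im t :=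
        imCLM.hasFDerivAt.comp_hasDerivAt t (hF t (interior_subset ht))
      simpa using (him.fun_sub ((hasDerivAt_id t).const_mul (G t₀).im)).hasDerivWithinAt
  have := hmono (left_mem_Icc.2 hab) hr hr.1
  simp only [sub_im] at this ⊢
  linarith

lemma exists_norm_sub_le_mul_sub (hF : ∀ t ∈ Icc a b, HasDerivAt F (G t) t)
    (hG : ContinuousOn G (Icc a b)) :
    ∃ M, ∀ r ∈ Icc a b, ‖F r - F a‖ ≤ M * (r - a) := by
  obtain ⟨M, hM⟩ := isCompact_Icc.exists_bound_of_continuousOn hG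
  refine ⟨M, fun r hr => ?_⟩
  have := (convex_Icc a b).norm_image_sub_le_of_norm_hasDerivWithin_le
    (fun t ht => (hF t ht).hasDerivWithinAt) hM (left_mem_Icc.2 (hr.1.trans hr.2)) hr
  rwa [Real.norm_of_nonneg (sub_nonneg.2 hr.1)] at this

end MeanValue

lemma mul_sq_add_sq_le_sq_add_sq {m M r u v x ρ : ℝ} (hm : 0 < m) (hr : 0 ≤ r) (hv : m * r ≤ v)
    (hu : |u + ρ| ≤ M * r) :
    m ^ 2 / (2 * m ^ 2 + 1 + 2 * M ^ 2) * (r ^ 2 + (x + ρ) ^ 2) ≤ (x - u) ^ 2 + v ^ 2 := by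
  have hv2 : m ^ 2 * r ^ 2 ≤ v ^ 2 := by nlinarith [mul_nonneg hm.le hr]
  have hu2 : (u + ρ) ^ 2 ≤ M ^ 2 * r ^ 2 := by
    rw [← mul_pow, ← sq_abs]; exact pow_le_pow_left₀ (abs_nonneg _) hu 2
  have hxρ : (x + ρ) ^ 2 ≤ 2 * (x - u) ^ 2 + 2 * (u + ρ) ^ 2 := by
    nlinarith [sq_nonneg (x - u - (u + ρ))]
  rw [div_mul_eq_mul_div, div_le_iff₀ (by positivity)]
  nlinarith [mul_le_mul_of_nonneg_left hv2 (sq_nonneg M), mul_le_mul_of_nonneg_left hu2 (sq_nonneg m),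
    sq_nonneg (x - u), sq_nonneg v, sq_nonneg m, sq_nonneg M]

theorem stmt_2_general (a b : ℝ)
    (ζs : ℂ) (hζs : ζs = -(a : ℂ) / (b : ℂ) + Complex.I)
    (γ : ℝ) (hγ : γ = Real.pi / Complex.arg ζs)
    (ρ : ℝ) (hρ : ρ = ‖ζs‖ ^ γ)
    (U' V' : ℝ → ℝ)
    (hU : ∀ r : ℝ, U' r = ((ζs + (r : ℂ)) ^ (γ : ℂ)).re)
    (hV : ∀ r : ℝ, V' r = ((ζs + (r : ℂ)) ^ (γ : ℂ)).im) :
    ∀ N : ℝ, 0 < N → ∃ c : ℝ, 0 < c ∧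
      ∀ r : ℝ, 0 < r → r ≤ N → ∀ x' : ℝ,
        (x' - U' r) ^ 2 + V' r ^ 2 ≥ c * (r ^ 2 + (x' + ρ) ^ 2) := by
  intro N hN
  have hζ : 0 < ζs.im := by simp [hζs]
  set F : ℝ → ℂ := fun s => (ζs + s) ^ (γ : ℂ)
  have hF : ∀ t ∈ Icc 0 N, HasDerivAt F (γ * (ζs + t) ^ ((γ : ℂ) - 1)) t :=
    fun t _ => hasDerivAt_add_ofReal_cpow hζ.ne' _ t
  have hG : ContinuousOn (fun t : ℝ => (γ : ℂ) * (ζs + t) ^ ((γ : ℂ) - 1)) (Icc 0 N) :=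
    (continuous_const.mul (continuous_iff_continuousAt.2 fun t =>
      (hasDerivAt_add_ofReal_cpow hζ.ne' _ t).continuousAt)).continuousOn
  obtain ⟨m, hm, hlow⟩ := exists_pos_mul_sub_le_im_sub hN.le hF hG
    (fun t ht => hγ ▸ im_mul_cpow_pi_div_arg_pos hζ ht.1)
  obtain ⟨M, hup⟩ := exists_norm_sub_le_mul_sub hF hG
  have hF0 : F 0 = -ρ := by
    simpa [F, hγ, hρ] using cpow_pi_div_arg (arg_pos_of_im_pos hζ).ne'
  refine ⟨m ^ 2 / (2 * m ^ 2 + 1 + 2 * M ^ 2), by positivity, fun r hr hrN x' => ?_⟩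
  specialize hlow r ⟨hr.le, hrN⟩
  specialize hup r ⟨hr.le, hrN⟩
  rw [hF0, sub_zero] at hlow hup
  rw [ge_iff_le, hU, hV]
  refine mul_sq_add_sq_le_sq_add_sq hm hr.le (by simpa [F] using hlow) ?_
  simpa [F] using (abs_re_le_norm _).trans hup

/-- For every `N > 0` there is `c_N > 0` such that for `0 < r ≤ N` and all real
`x'`, the squared distance from `x'` to `U'(r) + iV'(r)` is at least
`c_N (r² + (x' + ρ)²)`. -/
theorem stmt_2 (a b : ℝ) (hb : 0 < b)
    (ζs : ℂ) (hζs : ζs = -(a : ℂ) / (b : ℂ) + Complex.I)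
    (γ : ℝ) (hγ : γ = Real.pi / Complex.arg ζs)
    (ρ : ℝ) (hρ : ρ = ‖ζs‖ ^ γ)
    (U' V' : ℝ → ℝ)
    (hU : ∀ r : ℝ, U' r = ((ζs + (r : ℂ)) ^ (γ : ℂ)).re)
    (hV : ∀ r : ℝ, V' r = ((ζs + (r : ℂ)) ^ (γ : ℂ)).im) :
    ∀ N : ℝ, 0 < N → ∃ c : ℝ, 0 < c ∧
      ∀ r : ℝ, 0 < r → r ≤ N → ∀ x' : ℝ,
        (x' - U' r) ^ 2 + V' r ^ 2 ≥ c * (r ^ 2 + (x' + ρ) ^ 2) :=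
  stmt_2_general a b ζs hζs γ hγ ρ hρ U' V' hU hV
end

section
/- Let a, b be real numbers with b > 0 and set η = a + ib. For every pair (z₁, z₂) ∈ (ℂ \ {0})² there exist a unique complex number α with e^{-2πb} < |α| ≤ 1 and a unique complex number w such that z₁ = α e^{iηw} and z₂ = e^{iw}. (Equivalently: the leaves L_α, for α in the annulus 𝔸 = {α : e^{-2πb} < |α| ≤ 1}, are pairwise disjoint and their union is (ℂ*)².) -/
open Complex

/-!
The equation `z₂ = e^{iw}` determines `w` up to `w₀ + 2πm`, and then `z₁ = α e^{iηw}` determines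
`α = z₁ e^{-iηw}`. Replacing `w` by `w + 2π` multiplies `|α|` by `e^{2π Im η} = e^{2πb} > 1`, so
`log |α|` runs through an arithmetic progression of step `2πb` as `m` ranges over `ℤ`, and exactly
one of its terms lies in the half-open interval `(-2πb, 0]`.
-/

lemma exp_I_mul_eq_iff {z w : ℂ} (hz : z ≠ 0) :
    exp (I * w) = z ↔ ∃ m : ℤ, w = -I * log z + 2 * Real.pi * m := by
  conv_lhs => rw [← exp_log hz, exp_eq_exp_iff_exists_int]
  refine exists_congr fun m => ⟨fun h => ?_, fun h => ?_⟩
  · linear_combination (-I) * h + (w - 2 * Real.pi * m) * I_sq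
  · linear_combination I * h - log z * I_sq

lemma leaf_eq_iff {η z₂ : ℂ} (hz₂ : z₂ ≠ 0) (z₁ α w : ℂ) :
    (z₁ = α * exp (I * η * w) ∧ z₂ = exp (I * w)) ↔
      ∃ m : ℤ, w = -I * log z₂ + 2 * Real.pi * m ∧ α = z₁ * exp (-(I * η * w)) := by
  rw [eq_comm (a := z₂), exp_I_mul_eq_iff hz₂, and_comm, ← exists_and_right]
  refine exists_congr fun m => and_congr_right fun _ => ?_
  rw [exp_neg, ← div_eq_mul_inv, eq_div_iff (exp_ne_zero _), eq_comm]

lemma norm_mul_exp_neg_I_mul {z : ℂ} (hz : z ≠ 0) (η w : ℂ) :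
    ‖z * exp (-(I * η * w))‖ = Real.exp (Real.log ‖z‖ + (η * w).im) := by
  rw [norm_mul, norm_exp, Real.exp_add, Real.exp_log (norm_pos_iff.mpr hz)]
  congr 2
  simp only [neg_re, mul_re, mul_im, I_re, I_im]
  ring

lemma im_mul_add_two_pi_mul_int (η w : ℂ) (m : ℤ) :
    (η * (w + 2 * Real.pi * m)).im = (η * w).im + m • (2 * Real.pi * η.im) := by
  simp only [mul_im, add_im, mul_re, re_ofNat, ofReal_re, im_ofNat, ofReal_im, mul_zero, sub_zero,
    intCast_im, zero_mul, add_zero, intCast_re, add_re, zsmul_eq_mul]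
  ring

lemma exp_lt_exp_and_exp_le_one_iff {r t : ℝ} :
    (Real.exp (-r) < Real.exp t ∧ Real.exp t ≤ 1) ↔ t ∈ Set.Ioc (-r) (-r + r) := by
  rw [Real.exp_lt_exp, Real.exp_le_one_iff, neg_add_cancel, Set.mem_Ioc]

/-- For `η = a + ib` with `b > 0`, every point of `(ℂ*)²` lies on exactly one
leaf `L_α` with `α` in the annulus `e^{-2πb} < |α| ≤ 1`: for each
`(z₁, z₂) ∈ (ℂ*)²` there is a unique pair `(α, w)` with
`e^{-2πb} < |α| ≤ 1`, `z₁ = α e^{iηw}` and `z₂ = e^{iw}`. -/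
theorem stmt_16 (a b : ℝ) (hb : 0 < b) (η : ℂ) (hη : η = (a : ℂ) + (b : ℂ) * Complex.I) :
    ∀ z₁ z₂ : ℂ, z₁ ≠ 0 → z₂ ≠ 0 →
      ∃! p : ℂ × ℂ,
        (Real.exp (-(2 * Real.pi * b)) < ‖p.1‖ ∧ ‖p.1‖ ≤ 1) ∧
        z₁ = p.1 * Complex.exp (Complex.I * η * p.2) ∧
        z₂ = Complex.exp (Complex.I * p.2) := by
  intro z₁ z₂ hz₁ hz₂
  have hηb : η.im = b := by simp [hη]
  set w₀ := -I * log z₂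
  set w : ℤ → ℂ := fun m => w₀ + 2 * Real.pi * m
  have hnorm (m : ℤ) : ‖z₁ * exp (-(I * η * w m))‖ =
      Real.exp (Real.log ‖z₁‖ + (η * w₀).im + m • (2 * Real.pi * b)) := by
    rw [norm_mul_exp_neg_I_mul hz₁, im_mul_add_two_pi_mul_int, hηb, add_assoc]
  obtain ⟨m, hm, hm_unique⟩ := existsUnique_add_zsmul_mem_Ioc (by positivity : 0 < 2 * Real.pi * b)
    (Real.log ‖z₁‖ + (η * w₀).im) (-(2 * Real.pi * b))
  refine ⟨(z₁ * exp (-(I * η * w m)), w m), ⟨?_, (leaf_eq_iff hz₂ _ _ _).2 ⟨m, rfl, rfl⟩⟩, ?_⟩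
  · rwa [hnorm, exp_lt_exp_and_exp_le_one_iff]
  rintro ⟨α, v⟩ ⟨hα, hleaf⟩
  dsimp only at hα hleaf
  obtain ⟨n, rfl, rfl⟩ := (leaf_eq_iff hz₂ _ _ _).1 hleaf
  rw [show n = m from hm_unique n (by rwa [hnorm, exp_lt_exp_and_exp_le_one_iff] at hα)]
end
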